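/- The two simplices obtained by bisecting a simplex at the midpoint of one edge cover the original simplex: S = S₁ ∪ S₂. -/

import Mathlib

/-! Writing a point of `S` as `α • v₀ + β • v₁ + γ • y` with `y` in the hull of the remaining
vertices, only the edge part `α • v₀ + β • v₁` matters: it lies on the segment `[v₀, v₁]`, which
the midpoint splits into `[v₀, m] ∪ [m, v₁]`, and the two halves sweep out `S₂` and `S₁`. -/

open Set AffineMap

section Bisection

variable {𝕜 E : Type*} [Field 𝕜] [LinearOrder 𝕜] [IsStrictOrderedRing 𝕜]
  [AddCommGroup E] [Module 𝕜 E]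

theorem segment_eq_segment_union_segment {a b m : E} (hm : m ∈ segment 𝕜 a b) :
    segment 𝕜 a b = segment 𝕜 a m ∪ segment 𝕜 m b := by
  obtain ⟨t, ⟨ht0, ht1⟩, rfl⟩ : ∃ t ∈ Icc (0 : 𝕜) 1, lineMap a b t = m := by
    rwa [segment_eq_image_lineMap] at hm
  calc segment 𝕜 a b = lineMap a b '' segment 𝕜 (0 : 𝕜) 1 := by
        rw [image_segment, lineMap_apply_zero, lineMap_apply_one]
    _ = lineMap a b '' (segment 𝕜 0 t ∪ segment 𝕜 t 1) := by
        rw [segment_eq_Icc ht0, segment_eq_Icc ht1, segment_eq_Icc zero_le_one,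
          Icc_union_Icc_eq_Icc ht0 ht1]
    _ = segment 𝕜 a (lineMap a b t) ∪ segment 𝕜 (lineMap a b t) b := by
        rw [image_union, image_segment, image_segment, lineMap_apply_zero, lineMap_apply_one]

theorem convexHull_insert_insert_eq_union {a b m : E} (hm : m ∈ segment 𝕜 a b) (s : Set E) :
    convexHull 𝕜 (insert a (insert b s))
      = convexHull 𝕜 (insert m (insert b s)) ∪ convexHull 𝕜 (insert a (insert m s)) := by
  rcases s.eq_empty_or_nonempty with rfl | hs
  · simp only [insert_empty_eq, convexHull_pair]
    rw [segment_eq_segment_union_segment hm, union_comm]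
  · have hull_eq_join (x y : E) :
        convexHull 𝕜 (insert x (insert y s)) = convexJoin 𝕜 (segment 𝕜 x y) (convexHull 𝕜 s) := by
      have hxy : insert x (insert y s) = {x, y} ∪ s := by rw [insert_union, singleton_union]
      rw [hxy, convexHull_union (insert_nonempty _ _) hs, convexHull_pair]
    simp only [hull_eq_join]
    rw [segment_eq_segment_union_segment hm, convexJoin_union_left, union_comm]

end Bisection

theorem range_update_eq_insert_insert {ι α : Type*} [DecidableEq ι] (v : ι → α) {i j : ι}
    (hij : i ≠ j) (x : α) :
    range (Function.update v i x) = insert x (insert (v j) (v '' {i, j}ᶜ)) := by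
  ext y
  simp only [mem_range, mem_insert_iff, mem_image, mem_compl_iff, Function.update_apply]
  constructor
  · rintro ⟨k, rfl⟩
    by_cases hki : k = i
    · simp [hki]
    by_cases hkj : k = j
    · subst hkj; simp [hki]
    · exact Or.inr (Or.inr ⟨k, by simp [hki, hkj], by simp [hki]⟩)
  · rintro (rfl | rfl | ⟨k, hk, rfl⟩)
    · exact ⟨i, by simp⟩
    · exact ⟨j, by simp [hij.symm]⟩
    · exact ⟨k, by simp_all⟩

theorem simplex_bisection_covers_general
    (p : ℕ) (hp : 0 < p)
    (v : Fin (p + 1) → (Fin p → ℝ))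
    (m : Fin p → ℝ) (hm : m = midpoint ℝ (v 0) (v 1)) :
    convexHull ℝ (Set.range v)
      = convexHull ℝ (Set.range (Function.update v 0 m))
        ∪ convexHull ℝ (Set.range (Function.update v 1 m)) := by
  have h01 : (0 : Fin (p + 1)) ≠ 1 := by
    obtain ⟨q, rfl⟩ := Nat.exists_eq_add_one_of_ne_zero hp.ne'
    exact Fin.zero_ne_one
  have hm_mem : m ∈ segment ℝ (v 0) (v 1) := hm ▸ midpoint_mem_segment _ _
  have hS : range v = insert (v 0) (insert (v 1) (v '' {0, 1}ᶜ)) := by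
    simpa using range_update_eq_insert_insert v h01 (v 0)
  rw [hS, range_update_eq_insert_insert v h01, range_update_eq_insert_insert v h01.symm,
    pair_comm (1 : Fin (p + 1)), insert_comm m (v 0)]
  exact convexHull_insert_insert_eq_union hm_mem _

/-- The two simplices obtained by bisecting a simplex at the
midpoint of edge v₀v₁ cover the original simplex: S = S₁ ∪ S₂. -/
theorem simplex_bisection_covers
    (p : ℕ) (hp : 0 < p)
    (v : Fin (p + 1) → (Fin p → ℝ)) (hv : AffineIndependent ℝ v)
    (m : Fin p → ℝ) (hm : m = midpoint ℝ (v 0) (v 1)) :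
    convexHull ℝ (Set.range v)
      = convexHull ℝ (Set.range (Function.update v 0 m))
        ∪ convexHull ℝ (Set.range (Function.update v 1 m)) :=
  simplex_bisection_covers_general p hp v m hm
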